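/- arXiv:2408.15773 — 2 statements merged into one kernel-verified Lean document; each statement's English description precedes it below -/
import Mathlib

section
/- Let L : ℝ³ → ℝ be C² (arguments written (q, v, λ)), let q : ℝ → ℝ be C², λ : ℝ → ℝ be C¹, and let ξ, Ψ : ℝ → ℝ be C¹. Define the energy E(t) = (∂L/∂v)(q(t), q̇(t), λ(t))·q̇(t) − L(q(t), q̇(t), λ(t)). Then the following are equivalent: (i) the Noether–Bessel-Hagen equation with δq = 0 holds along the trajectory, i.e. (∂L/∂λ)·λ̇(t)·ξ(t) − (∂L/∂v)·q̇(t)·ξ'(t) + L·ξ'(t) = Ψ'(t) (partial derivatives of L evaluated at (q(t), q̇(t), λ(t))); (ii) ξ(t)·[dE/dt(t) + (∂L/∂λ)(q(t), q̇(t), λ(t))·λ̇(t)] = d/dt[Ψ(t) + ξ(t)·E(t)] for all t. In other words, under a pure (generally non-uniform) time translation, the quasisymmetry condition is exactly the statement that the Noether charge N = Ψ + ξE satisfies dN/dt = ξ·(dE/dt + ∂_λL·λ̇), the First-Law form. -/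
/-! With `δq = 0` only the time reparametrisation acts, and the Noether–Bessel-Hagen equation
reads `Ψ' = ξ ∂_λL λ̇ − ξ' E`. Since `(Ψ + ξE)' = Ψ' + ξ'E + ξE'`, this is a linear
rearrangement of `ξ (E' + ∂_λL λ̇) = (Ψ + ξE)'`. The analytic content is that `E` is
differentiable, for which `∂_vL` must be `C¹` along the `C¹` curve `t ↦ (q, q̇, λ)`. -/

section PartialDerivative

variable {L : ℝ → ℝ → ℝ → ℝ}

theorem deriv_partial_snd_eq_fderiv
    (hL : Differentiable ℝ (fun x : ℝ × ℝ × ℝ => L x.1 x.2.1 x.2.2)) (a b c : ℝ) :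
    deriv (fun v => L a v c) b
      = fderiv ℝ (fun x : ℝ × ℝ × ℝ => L x.1 x.2.1 x.2.2) (a, b, c) (0, 1, 0) := by
  have hline : HasDerivAt (fun v : ℝ => ((a, v, c) : ℝ × ℝ × ℝ)) (0, 1, 0) b :=
    (hasDerivAt_const b a).prodMk ((hasDerivAt_id b).prodMk (hasDerivAt_const b c))
  exact ((hL (a, b, c)).hasFDerivAt.comp_hasDerivAt b hline).deriv

theorem contDiff_deriv_partial_snd {n : WithTop ℕ∞}
    (hL : ContDiff ℝ (n + 1) (fun x : ℝ × ℝ × ℝ => L x.1 x.2.1 x.2.2)) :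
    ContDiff ℝ n (fun x : ℝ × ℝ × ℝ => deriv (fun v => L x.1 v x.2.2) x.2.1) := by
  have hdiff := hL.differentiable (by simp)
  simp only [deriv_partial_snd_eq_fderiv hdiff]
  exact (hL.fderiv_right le_rfl).clm_apply contDiff_const

theorem contDiff_energy {n : WithTop ℕ∞}
    (hL : ContDiff ℝ (n + 1) (fun x : ℝ × ℝ × ℝ => L x.1 x.2.1 x.2.2))
    {q lam : ℝ → ℝ} (hq : ContDiff ℝ (n + 1) q) (hlam : ContDiff ℝ n lam) :
    ContDiff ℝ n (fun t =>
      deriv (fun v => L (q t) v (lam t)) (deriv q t) * deriv q t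
        - L (q t) (deriv q t) (lam t)) := by
  have hdq : ContDiff ℝ n (deriv q) := hq.deriv'
  have hcurve : ContDiff ℝ n (fun t => ((q t, deriv q t, lam t) : ℝ × ℝ × ℝ)) :=
    (hq.of_le le_self_add).prodMk (hdq.prodMk hlam)
  exact (((contDiff_deriv_partial_snd hL).comp hcurve).mul hdq).sub
    ((hL.of_le le_self_add).comp hcurve)

end PartialDerivative

/-- Under a pure (non-uniform) time translation `t → t + η·ξ(t)` (with `δq = 0`),
the Noether–Bessel-Hagen quasisymmetry condition is equivalent to the First-Law
form `ξ·(dE/dt + ∂_λL·λ̇) = d/dt(Ψ + ξ·E)` for the Noether charge `N = Ψ + ξE`. -/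
theorem stmt_5
    (L : ℝ → ℝ → ℝ → ℝ)
    (hL : ContDiff ℝ 2 (fun x : ℝ × ℝ × ℝ => L x.1 x.2.1 x.2.2))
    (q : ℝ → ℝ) (hq : ContDiff ℝ 2 q)
    (lam ξ Ψ : ℝ → ℝ)
    (hlam : ContDiff ℝ 1 lam) (hξ : ContDiff ℝ 1 ξ) (hΨ : ContDiff ℝ 1 Ψ)
    (E : ℝ → ℝ)
    (hE : E = fun t =>
      deriv (fun v => L (q t) v (lam t)) (deriv q t) * deriv q t
        - L (q t) (deriv q t) (lam t)) :
    (∀ t : ℝ,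
      deriv (fun l => L (q t) (deriv q t) l) (lam t) * deriv lam t * ξ t
        - deriv (fun v => L (q t) v (lam t)) (deriv q t) * deriv q t * deriv ξ t
        + L (q t) (deriv q t) (lam t) * deriv ξ t
      = deriv Ψ t)
    ↔ (∀ t : ℝ,
      ξ t * (deriv E t
          + deriv (fun l => L (q t) (deriv q t) l) (lam t) * deriv lam t)
      = deriv (fun s => Ψ s + ξ s * E s) t) := by
  have hEdiff : Differentiable ℝ E :=
    hE ▸ (contDiff_energy (n := 1) hL hq hlam).differentiable one_ne_zero
  have hcharge : ∀ t, deriv (fun s => Ψ s + ξ s * E s) t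
      = deriv Ψ t + (deriv ξ t * E t + ξ t * deriv E t) := fun t =>
    ((hΨ.differentiable one_ne_zero t).hasDerivAt.add
      ((hξ.differentiable one_ne_zero t).hasDerivAt.mul (hEdiff t).hasDerivAt)).deriv
  have hEt : ∀ t, E t = deriv (fun v => L (q t) v (lam t)) (deriv q t) * deriv q t
      - L (q t) (deriv q t) (lam t) := fun t => by rw [hE]
  refine forall_congr' fun t => ?_
  rw [hcharge t, hEt t]
  constructor <;> intro h <;> linarith
end

section
/- Let L : ℝ³ → ℝ be C² (arguments written (q, v, λ)), let q : ℝ → ℝ be C², λ : ℝ → ℝ be C¹, let ξ, M : ℝ → ℝ be continuous, and let N : ℝ → ℝ be C¹ satisfying the averaged Killing relation N'(t) = ξ(t)·( dE/dt(t) + M(t)·λ̇(t) ) for all t, where E(t) = (∂L/∂v)(q(t), q̇(t), λ(t))·q̇(t) − L(q(t), q̇(t), λ(t)). Then for all t₁ < t₂: N(t₂) − N(t₁) = ∫_{t₁}^{t₂} [ −ξ(t)·ℰ(t)·q̇(t) + ξ(t)·λ̇(t)·( M(t) − (∂L/∂λ)(q(t), q̇(t), λ(t)) ) ] dt, where ℰ(t)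 = (∂L/∂q)(q(t), q̇(t), λ(t)) − d/dt[(∂L/∂v)(q(t), q̇(t), λ(t))]. (The two sources of Noether-charge/entropy production are deviation from the quasistatic average, λ̇·(⟨∂_λL⟩ − ∂_λL), and deviation from the equations of motion, ℰ·q̇.) -/
/-!
Along the trajectory the energy `E = p q̇ − L`, with momentum `p = ∂L/∂v`, obeys the
balance law `dE/dt = −ℰ q̇ − (∂L/∂λ) λ̇`: the chain rule gives
`dE/dt = ṗ q̇ + p q̈ − (∂_q L q̇ + ∂_v L q̈ + ∂_λ L λ̇)`, the `q̈` terms cancel and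
`ṗ − ∂_q L = −ℰ`. Substituting this into the Killing relation turns `N'` into the stated
integrand, and the fundamental theorem of calculus integrates it.
-/

theorem hasDerivAt_comp_partials {L : ℝ → ℝ → ℝ → ℝ} {x y z : ℝ → ℝ} {x' y' z' t : ℝ}
    (hL : DifferentiableAt ℝ (fun p : ℝ × ℝ × ℝ => L p.1 p.2.1 p.2.2) (x t, y t, z t))
    (hx : HasDerivAt x x' t) (hy : HasDerivAt y y' t) (hz : HasDerivAt z z' t) :
    HasDerivAt (fun s => L (x s) (y s) (z s))
      (deriv (fun a => L a (y t) (z t)) (x t) * x'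
        + deriv (fun b => L (x t) b (z t)) (y t) * y'
        + deriv (fun c => L (x t) (y t) c) (z t) * z') t := by
  have hF := hL.hasFDerivAt
  have h₁ := (hF.comp_hasDerivAt (x t) ((hasDerivAt_id' (x t)).prodMk
    ((hasDerivAt_const _ (y t)).prodMk (hasDerivAt_const _ (z t))))).deriv
  have h₂ := (hF.comp_hasDerivAt (y t) ((hasDerivAt_const _ (x t)).prodMk
    ((hasDerivAt_id' (y t)).prodMk (hasDerivAt_const _ (z t))))).deriv
  have h₃ := (hF.comp_hasDerivAt (z t) ((hasDerivAt_const _ (x t)).prodMk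
    ((hasDerivAt_const _ (y t)).prodMk (hasDerivAt_id' (z t))))).deriv
  have hv : ((x', y', z') : ℝ × ℝ × ℝ)
      = x' • ((1 : ℝ), (0 : ℝ), (0 : ℝ)) + y' • ((0 : ℝ), (1 : ℝ), (0 : ℝ))
        + z' • ((0 : ℝ), (0 : ℝ), (1 : ℝ)) := by
    simp
  refine (hF.comp_hasDerivAt t (hx.prodMk (hy.prodMk hz))).congr_deriv ?_
  simp only [Function.comp_def] at h₁ h₂ h₃
  rw [hv, map_add, map_add, map_smul, map_smul, map_smul, ← h₁, ← h₂, ← h₃]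
  simp only [smul_eq_mul]
  ring

section Mechanics

variable (L : ℝ → ℝ → ℝ → ℝ) (q lam : ℝ → ℝ)

noncomputable def momentum (t : ℝ) : ℝ :=
  deriv (fun v => L (q t) v (lam t)) (deriv q t)

noncomputable def energy (t : ℝ) : ℝ :=
  momentum L q lam t * deriv q t - L (q t) (deriv q t) (lam t)

noncomputable def eulerLagrange (t : ℝ) : ℝ :=
  deriv (fun x => L x (deriv q t) (lam t)) (q t) - deriv (momentum L q lam) t

variable {L q lam}

theorem hasDerivAt_energy {t : ℝ}
    (hL : DifferentiableAt ℝ (fun p : ℝ × ℝ × ℝ => L p.1 p.2.1 p.2.2)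
      (q t, deriv q t, lam t))
    (hq : DifferentiableAt ℝ q t) (hq' : DifferentiableAt ℝ (deriv q) t)
    (hlam : DifferentiableAt ℝ lam t) (hp : DifferentiableAt ℝ (momentum L q lam) t) :
    HasDerivAt (energy L q lam)
      (-eulerLagrange L q lam t * deriv q t
        - deriv (fun l => L (q t) (deriv q t) l) (lam t) * deriv lam t) t := by
  have hLag := hasDerivAt_comp_partials hL hq.hasDerivAt hq'.hasDerivAt hlam.hasDerivAt
  refine ((hp.hasDerivAt.mul hq'.hasDerivAt).sub hLag).congr_deriv ?_
  simp only [eulerLagrange, momentum]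
  ring

theorem differentiable_momentum
    (hL : ContDiff ℝ 2 (fun p : ℝ × ℝ × ℝ => L p.1 p.2.1 p.2.2))
    (hq : ContDiff ℝ 2 q) (hlam : ContDiff ℝ 1 lam) :
    Differentiable ℝ (momentum L q lam) := by
  set F : ℝ × ℝ × ℝ → ℝ := fun p => L p.1 p.2.1 p.2.2
  have hq' : ContDiff ℝ 1 (deriv q) := hq.deriv'
  have hγ : ContDiff ℝ 1 fun t => (q t, deriv q t, lam t) :=
    (hq.of_le (by norm_num)).prodMk (hq'.prodMk hlam)
  have hF' : ContDiff ℝ 1 fun p => fderiv ℝ F p ((0 : ℝ), (1 : ℝ), (0 : ℝ)) :=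
    (hL.fderiv_right (by norm_num)).clm_apply contDiff_const
  have hp : momentum L q lam = fun t => fderiv ℝ F (q t, deriv q t, lam t) (0, 1, 0) := by
    funext t
    exact ((hL.differentiable (by norm_num) _).hasFDerivAt.comp_hasDerivAt _
      ((hasDerivAt_const _ (q t)).prodMk
        ((hasDerivAt_id (deriv q t)).prodMk (hasDerivAt_const _ (lam t))))).deriv
  rw [hp]
  exact (hF'.comp hγ).differentiable one_ne_zero

end Mechanics

theorem stmt_11_general
    (L : ℝ → ℝ → ℝ → ℝ)
    (hL : ContDiff ℝ 2 (fun x : ℝ × ℝ × ℝ => L x.1 x.2.1 x.2.2))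
    (q : ℝ → ℝ) (hq : ContDiff ℝ 2 q)
    (lam : ℝ → ℝ) (hlam : ContDiff ℝ 1 lam)
    (ξ M : ℝ → ℝ)
    (N : ℝ → ℝ) (hN : ContDiff ℝ 1 N)
    (E : ℝ → ℝ)
    (hE : E = fun t =>
      deriv (fun v => L (q t) v (lam t)) (deriv q t) * deriv q t
        - L (q t) (deriv q t) (lam t))
    (EulerL : ℝ → ℝ)
    (hEulerL : EulerL = fun t =>
      deriv (fun x => L x (deriv q t) (lam t)) (q t)
        - deriv (fun s => deriv (fun v => L (q s) v (lam s)) (deriv q s)) t)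
    (hKilling : ∀ t : ℝ, deriv N t = ξ t * (deriv E t + M t * deriv lam t)) :
    ∀ t₁ t₂ : ℝ, t₁ < t₂ →
      N t₂ - N t₁ = ∫ t in t₁..t₂,
        (- ξ t * EulerL t * deriv q t
          + ξ t * deriv lam t
            * (M t - deriv (fun l => L (q t) (deriv q t) l) (lam t))) := by
  intro t₁ t₂ _
  have hE' : E = energy L q lam := hE
  have hEulerL' : EulerL = eulerLagrange L q lam := hEulerL
  have hN' : ∀ t, deriv N t = - ξ t * EulerL t * deriv q t
      + ξ t * deriv lam t * (M t - deriv (fun l => L (q t) (deriv q t) l) (lam t)) := by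
    intro t
    have hEt := hasDerivAt_energy (hL.differentiable (by norm_num) _)
      (hq.differentiable (by norm_num) t) (hq.deriv'.differentiable one_ne_zero t)
      (hlam.differentiable one_ne_zero t) (differentiable_momentum hL hq hlam t)
    rw [hKilling, hE', hEt.deriv, hEulerL']
    ring
  rw [← intervalIntegral.integral_deriv_eq_sub (fun t _ => hN.differentiable one_ne_zero t)
    ((hN.continuous_deriv le_rfl).intervalIntegrable t₁ t₂)]
  exact intervalIntegral.integral_congr fun t _ => hN' t

/-- The two sources of Noether-charge (entropy) production: if the averaged
Killing relation `N' = ξ·(dE/dt + M·λ̇)` holds, then the change of `N` is the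
integral of `−ξ·ℰ·q̇ + ξ·λ̇·(M − ∂L/∂λ)`. -/
theorem stmt_11
    (L : ℝ → ℝ → ℝ → ℝ)
    (hL : ContDiff ℝ 2 (fun x : ℝ × ℝ × ℝ => L x.1 x.2.1 x.2.2))
    (q : ℝ → ℝ) (hq : ContDiff ℝ 2 q)
    (lam : ℝ → ℝ) (hlam : ContDiff ℝ 1 lam)
    (ξ M : ℝ → ℝ) (hξ : Continuous ξ) (hM : Continuous M)
    (N : ℝ → ℝ) (hN : ContDiff ℝ 1 N)
    (E : ℝ → ℝ)
    (hE : E = fun t =>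
      deriv (fun v => L (q t) v (lam t)) (deriv q t) * deriv q t
        - L (q t) (deriv q t) (lam t))
    (EulerL : ℝ → ℝ)
    (hEulerL : EulerL = fun t =>
      deriv (fun x => L x (deriv q t) (lam t)) (q t)
        - deriv (fun s => deriv (fun v => L (q s) v (lam s)) (deriv q s)) t)
    (hKilling : ∀ t : ℝ, deriv N t = ξ t * (deriv E t + M t * deriv lam t)) :
    ∀ t₁ t₂ : ℝ, t₁ < t₂ →
      N t₂ - N t₁ = ∫ t in t₁..t₂,
        (- ξ t * EulerL t * deriv q t
          + ξ t * deriv lam t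
            * (M t - deriv (fun l => L (q t) (deriv q t) l) (lam t))) :=
  stmt_11_general L hL q hq lam hlam ξ M N hN E hE EulerL hEulerL hKilling
end
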